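/- Let x be a sequence of length m with distinct elements and let i, j ∈ {1,...,m-1} with i ≠ j, x[i] ≠ x[i+1], x[j] ≠ x[j+1]. Then the Cartesian trees of τ(x,i) and τ(x,j) are distinct, i.e., swaps at different positions never produce the same Cartesian tree. -/

import Mathlib

/-- Binary tree shapes (Cartesian trees are determined by their shape). -/
inductive BTree : Type
  | nil : BTree
  | node : BTree → BTree → BTree
deriving DecidableEq

namespace BTree

/-- Number of nodes. -/
def size : BTree → ℕ
  | nil => 0
  | node l r => size l + size r + 1

/-- Length of the leftmost path. -/
def LMP : BTree → ℕ
  | nil => 0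
  | node l _ => LMP l + 1

/-- Length of the rightmost path. -/
def RMP : BTree → ℕ
  | nil => 0
  | node _ r => RMP r + 1

end BTree

/-- Minimum value of a list (0 for the empty list). -/
def listMin : List ℤ → ℤ
  | [] => 0
  | a :: t => t.foldl min a

/-- Index (0-based) of the minimum of a list. -/
def minIdx (l : List ℤ) : ℕ := l.idxOf (listMin l)

/-- Cartesian tree of a list, with fuel for termination. -/
def ctreeAux : ℕ → List ℤ → BTree
  | 0, _ => .nil
  | _ + 1, [] => .nil
  | n + 1, a :: t =>
      let g := minIdx (a :: t)
      .node (ctreeAux n ((a :: t).take g)) (ctreeAux n ((a :: t).drop (g + 1)))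

/-- Cartesian tree of a list: the root is the position of the minimum,
its subtrees are the Cartesian trees of the prefix and suffix around it. -/
def ctreeL (l : List ℤ) : BTree := ctreeAux l.length l

/-- The factor x[a..b] (1-based positions) of a sequence, as a list. -/
def seqList (x : ℕ → ℤ) (a b : ℕ) : List ℤ :=
  (List.range (b + 1 - a)).map (fun k => x (a + k))

/-- Cartesian tree of the sequence x[1..m]. -/
def ctreeOf (m : ℕ) (x : ℕ → ℤ) : BTree := ctreeL (seqList x 1 m)

/-- Positions j < h (1-based) with x[j] < x[h]. -/
def PDset (x : ℕ → ℤ) (h : ℕ) : Finset ℕ :=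
  (Finset.Ico 1 h).filter (fun j => x j < x h)

/-- Parent-distance table: PD_x[h] = h - max{j < h : x[j] < x[h]}, 0 if no such j. -/
def PD (x : ℕ → ℤ) (h : ℕ) : ℕ :=
  if hs : (PDset x h).Nonempty then h - (PDset x h).max' hs else 0

/-- Positions h < j ≤ m with x[j] < x[h]. -/
def RPDset (m : ℕ) (x : ℕ → ℤ) (h : ℕ) : Finset ℕ :=
  (Finset.Ioc h m).filter (fun j => x j < x h)

/-- Reverse parent-distance table: RPD_x[h] = min{j > h : x[j] < x[h]} - h, 0 if no such j. -/
def RPD (m : ℕ) (x : ℕ → ℤ) (h : ℕ) : ℕ :=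
  if hs : (RPDset m x h).Nonempty then (RPDset m x h).min' hs - h else 0

/-- Referent of h: the smallest position j > h with x[j] < x[h], or -1 if none. -/
def refD (m : ℕ) (x : ℕ → ℤ) (h : ℕ) : ℤ :=
  if hs : (RPDset m x h).Nonempty then ((RPDset m x h).min' hs : ℤ) else -1

/-- Skipped-number table: SN_x[h] is the number of nodes on the rightmost path of the
left subtree of node h in C(x), i.e. the number of positions whose referent is h. -/
def SN (m : ℕ) (x : ℕ → ℤ) (h : ℕ) : ℕ :=
  ((Finset.Ico 1 h).filter (fun j => refD m x j = (h : ℤ))).card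

/-- The swap τ(x,i): exchange the entries at positions i and i+1. -/
def swapAt (x : ℕ → ℤ) (i : ℕ) : ℕ → ℤ :=
  fun j => if j = i then x (i + 1) else if j = i + 1 then x i else x j

/-- ng(T,i): the Cartesian trees obtained from a sequence realizing T by one swap
at position i (valid positions are 1 ≤ i ≤ m-1). -/
def ngi (m : ℕ) (T : BTree) (i : ℕ) : Set BTree :=
  { S | 1 ≤ i ∧ i + 1 ≤ m ∧ ∃ x : ℕ → ℤ, Set.InjOn x (Set.Icc 1 m) ∧
        ctreeOf m x = T ∧ S = ctreeOf m (swapAt x i) }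

/-- ng(T): the swap neighbourhood of T. -/
def ng (m : ℕ) (T : BTree) : Set BTree := ⋃ i, ngi m T i

/-- Number of permutations of {1,...,n} whose Cartesian tree is A. -/
noncomputable def permCount (n : ℕ) (A : BTree) : ℕ :=
  Set.ncard { σ : Equiv.Perm (Fin n) |
    ctreeL (List.ofFn (fun k : Fin n => ((σ k : ℕ) : ℤ) + 1)) = A }

/-- Product over all nodes t of A of the size of the subtree rooted at t. -/
def hookProd : BTree → ℕ
  | .nil => 1
  | .node l r => (BTree.node l r).size * hookProd l * hookProd r

/-!
The Cartesian tree of a sequence of distinct numbers determines its up-down pattern: reading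
the tree in order, consecutive positions are joined either by an edge into a left subtree,
which is a descent, or by an edge into a right subtree, which is an ascent. A swap at `i`
reverses the comparison at `i`, and a swap at `j ≥ i + 2` leaves it alone, so those trees
differ. For `j = i + 1` the comparisons at `i` and `i + 1` would have to agree for the
patterns `x[i+1] x[i] x[i+2]` and `x[i] x[i+2] x[i+1]`, and no three distinct numbers
allow that.
-/

lemma min?_eq_some_listMin {l : List ℤ} (hl : l ≠ []) : l.min? = some (listMin l) := by
  cases l with
  | nil => exact absurd rfl hl
  | cons a t => rfl

lemma listMin_mem {l : List ℤ} (hl : l ≠ []) : listMin l ∈ l :=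
  (List.min?_eq_some_iff.1 (min?_eq_some_listMin hl)).1

lemma listMin_le {l : List ℤ} {b : ℤ} (hb : b ∈ l) : listMin l ≤ b :=
  (List.min?_eq_some_iff.1 (min?_eq_some_listMin (List.ne_nil_of_mem hb))).2 b hb

lemma minIdx_lt_length {l : List ℤ} (hl : l ≠ []) : minIdx l < l.length :=
  List.idxOf_lt_length_iff.2 (listMin_mem hl)

lemma getElem_minIdx {l : List ℤ} (hl : l ≠ []) : l[minIdx l]'(minIdx_lt_length hl) = listMin l :=
  List.getElem_idxOf _

lemma ctreeAux_nil (n : ℕ) : ctreeAux n [] = .nil := by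
  cases n <;> rfl

lemma ctreeAux_eq_of_length_le (n : ℕ) :
    ∀ (l : List ℤ) (n' : ℕ), l.length ≤ n → l.length ≤ n' → ctreeAux n l = ctreeAux n' l := by
  induction n with
  | zero =>
    intro l n' hl _
    rw [List.eq_nil_of_length_eq_zero (Nat.le_zero.1 hl), ctreeAux_nil, ctreeAux_nil]
  | succ n ih =>
    rintro (_ | ⟨a, t⟩) n' hn hn'
    · rw [ctreeAux_nil, ctreeAux_nil]
    have hg := minIdx_lt_length (l := a :: t) (List.cons_ne_nil a t)
    simp only [List.length_cons] at hn hn' hg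
    obtain ⟨n', rfl⟩ : ∃ k, n' = k + 1 := ⟨n' - 1, by omega⟩
    simp only [ctreeAux]
    rw [ih _ n' (by rw [List.length_take, List.length_cons]; omega)
        (by rw [List.length_take, List.length_cons]; omega),
      ih _ n' (by rw [List.length_drop, List.length_cons]; omega)
        (by rw [List.length_drop, List.length_cons]; omega)]

lemma ctreeAux_eq_ctreeL {n : ℕ} {l : List ℤ} (h : l.length ≤ n) : ctreeAux n l = ctreeL l :=
  ctreeAux_eq_of_length_le n l l.length h le_rfl

lemma ctreeL_cons (a : ℤ) (t : List ℤ) :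
    ctreeL (a :: t) =
      .node (ctreeL ((a :: t).take (minIdx (a :: t))))
        (ctreeL ((a :: t).drop (minIdx (a :: t) + 1))) := by
  have hg := minIdx_lt_length (l := a :: t) (List.cons_ne_nil a t)
  simp only [List.length_cons] at hg
  rw [ctreeL, List.length_cons, ctreeAux,
    ctreeAux_eq_ctreeL (by rw [List.length_take, List.length_cons]; omega),
    ctreeAux_eq_ctreeL (by rw [List.length_drop, List.length_cons]; omega)]

lemma ctreeL_eq_nil_iff {l : List ℤ} : ctreeL l = .nil ↔ l = [] := by
  cases l with
  | nil => exact iff_of_true rfl rfl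
  | cons a t => simp [ctreeL_cons]

lemma exists_eq_append_cons_ctreeL {l : List ℤ} (hl : l ≠ []) (hnd : l.Nodup) :
    ∃ u a w, l = u ++ a :: w ∧ (∀ b ∈ u, a < b) ∧ (∀ b ∈ w, a < b) ∧
      ctreeL l = .node (ctreeL u) (ctreeL w) := by
  obtain ⟨c, t, rfl⟩ := List.exists_cons_of_ne_nil hl
  have hg := minIdx_lt_length hl
  have hsplit : c :: t = (c :: t).take (minIdx (c :: t)) ++
      listMin (c :: t) :: (c :: t).drop (minIdx (c :: t) + 1) := by
    rw [← getElem_minIdx hl, ← List.drop_eq_getElem_cons hg, List.take_append_drop]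
  have hmin : ∀ b ∈ c :: t, b ≠ listMin (c :: t) → listMin (c :: t) < b :=
    fun b hb hne => lt_of_le_of_ne (listMin_le hb) hne.symm
  have hnotin := (List.nodup_cons.1 (List.nodup_middle.1 (hsplit ▸ hnd))).1
  refine ⟨_, _, _, hsplit, fun b hb => ?_, fun b hb => ?_, ctreeL_cons c t⟩
  · exact hmin b (List.mem_of_mem_take hb) fun he => hnotin (he ▸ List.mem_append_left _ hb)
  · exact hmin b (List.mem_of_mem_drop hb) fun he => hnotin (he ▸ List.mem_append_right _ hb)

def ascentPattern : List ℤ → List Bool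
  | a :: b :: t => decide (a < b) :: ascentPattern (b :: t)
  | _ => []

@[simp] lemma ascentPattern_cons_cons (a b : ℤ) (t : List ℤ) :
    ascentPattern (a :: b :: t) = decide (a < b) :: ascentPattern (b :: t) := rfl

@[simp] lemma ascentPattern_nil : ascentPattern [] = [] := rfl

@[simp] lemma ascentPattern_singleton (a : ℤ) : ascentPattern [a] = [] := rfl

lemma length_ascentPattern (l : List ℤ) : (ascentPattern l).length = l.length - 1 := by
  induction l with
  | nil => rfl
  | cons a t ih => cases t <;> simp_all

lemma getElem_ascentPattern :
    ∀ (l : List ℤ) (k : ℕ) (hk : k + 1 < l.length),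
      (ascentPattern l)[k]'(by rw [length_ascentPattern]; omega) = decide (l[k] < l[k + 1])
  | a :: b :: t, 0, _ => rfl
  | a :: b :: t, k + 1, hk => getElem_ascentPattern (b :: t) k (by simpa using hk)

lemma ascentPattern_append_cons_of_lt (u w : List ℤ) {a : ℤ}
    (hu : ∀ b ∈ u, a < b) (hw : ∀ b ∈ w, a < b) :
    ascentPattern (u ++ a :: w) = ascentPattern u ++ (if u = [] then [] else [false]) ++
      ((if w = [] then [] else [true]) ++ ascentPattern w) := by
  induction u with
  | nil =>
    cases w with
    | nil => rfl
    | cons c w => simp [hw c List.mem_cons_self]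
  | cons b u ih =>
    cases u with
    | nil => simpa [(hu b List.mem_cons_self).not_gt] using ih (by simp)
    | cons c u => simpa using ih (fun d hd => hu d (List.mem_cons_of_mem b hd))

def BTree.ascentPattern : BTree → List Bool
  | .nil => []
  | .node l r => l.ascentPattern ++ (if l = .nil then [] else [false]) ++
      ((if r = .nil then [] else [true]) ++ r.ascentPattern)

theorem BTree.ascentPattern_ctreeL (l : List ℤ) (hnd : l.Nodup) :
    (ctreeL l).ascentPattern = _root_.ascentPattern l := by
  rcases eq_or_ne l [] with rfl | hl
  · rfl
  obtain ⟨u, a, w, rfl, hu, hw, hC⟩ := exists_eq_append_cons_ctreeL hl hnd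
  have hnd' := List.nodup_middle.1 hnd
  rw [hC, BTree.ascentPattern, ascentPattern_append_cons_of_lt u w hu hw,
    ascentPattern_ctreeL u ((List.nodup_cons.1 hnd').2.sublist (List.sublist_append_left u w)),
    ascentPattern_ctreeL w ((List.nodup_cons.1 hnd').2.sublist (List.sublist_append_right u w))]
  simp only [ctreeL_eq_nil_iff]
termination_by l.length

lemma length_seqList (y : ℕ → ℤ) (m : ℕ) : (seqList y 1 m).length = m := by
  simp [seqList]

lemma nodup_seqList {y : ℕ → ℤ} {m : ℕ} (hy : Set.InjOn y (Set.Icc 1 m)) :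
    (seqList y 1 m).Nodup := by
  refine List.nodup_range.map_on fun k₁ h₁ k₂ h₂ he => ?_
  simp only [List.mem_range] at h₁ h₂
  have := hy (show 1 + k₁ ∈ Set.Icc 1 m from ⟨by omega, by omega⟩)
    (show 1 + k₂ ∈ Set.Icc 1 m from ⟨by omega, by omega⟩) he
  omega

lemma lt_succ_iff_of_ctreeOf_eq {m k : ℕ} {y z : ℕ → ℤ} (hy : Set.InjOn y (Set.Icc 1 m))
    (hz : Set.InjOn z (Set.Icc 1 m)) (h : ctreeOf m y = ctreeOf m z) (hk : 1 ≤ k)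
    (hkm : k + 1 ≤ m) : y k < y (k + 1) ↔ z k < z (k + 1) := by
  have hpat := congrArg BTree.ascentPattern h
  rw [ctreeOf, ctreeOf, BTree.ascentPattern_ctreeL _ (nodup_seqList hy),
    BTree.ascentPattern_ctreeL _ (nodup_seqList hz)] at hpat
  have hk' : (k - 1) + 1 < m := by omega
  have := List.getElem_of_eq hpat (i := k - 1) (by rw [length_ascentPattern, length_seqList]; omega)
  rw [getElem_ascentPattern _ _ (by rw [length_seqList]; exact hk'),
    getElem_ascentPattern _ _ (by rw [length_seqList]; exact hk')] at this
  simpa [seqList, show 1 + (k - 1) = k by omega, show 1 + (k - 1 + 1) = k + 1 by omega] using this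

lemma swapAt_apply_left (x : ℕ → ℤ) (i : ℕ) : swapAt x i i = x (i + 1) := if_pos rfl

lemma swapAt_apply_right (x : ℕ → ℤ) (i : ℕ) : swapAt x i (i + 1) = x i := by
  simp [swapAt]

lemma swapAt_apply_of_ne (x : ℕ → ℤ) {i k : ℕ} (h : k ≠ i) (h' : k ≠ i + 1) :
    swapAt x i k = x k := by
  simp [swapAt, h, h']

lemma swapAt_eq_comp (x : ℕ → ℤ) (i : ℕ) : swapAt x i = x ∘ Equiv.swap i (i + 1) := by
  funext j
  simp only [swapAt, Function.comp_apply, Equiv.swap_apply_def]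
  split_ifs <;> simp_all

lemma injOn_swapAt {m i : ℕ} {x : ℕ → ℤ} (hx : Set.InjOn x (Set.Icc 1 m)) (hi : 1 ≤ i)
    (him : i + 1 ≤ m) : Set.InjOn (swapAt x i) (Set.Icc 1 m) := by
  rw [swapAt_eq_comp]
  refine hx.comp (Equiv.injective _).injOn fun k hk => ?_
  simp only [Set.mem_Icc, Equiv.swap_apply_def] at hk ⊢
  split_ifs <;> omega

lemma ctreeOf_swapAt_ne_of_lt {m i j : ℕ} {x : ℕ → ℤ} (hx : Set.InjOn x (Set.Icc 1 m))
    (hi : 1 ≤ i) (hij : i < j) (hjm : j + 1 ≤ m) :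
    ctreeOf m (swapAt x i) ≠ ctreeOf m (swapAt x j) := by
  intro h
  have hxi : x i ≠ x (i + 1) := hx.ne ⟨hi, by omega⟩ ⟨by omega, by omega⟩ (by omega)
  have cmp (k : ℕ) (hk : 1 ≤ k) (hkm : k + 1 ≤ m) :=
    lt_succ_iff_of_ctreeOf_eq (injOn_swapAt hx hi (by omega)) (injOn_swapAt hx (by omega) hjm) h
      hk hkm
  have cmp_i := cmp i hi (by omega)
  rcases (show i + 1 ≤ j from hij).eq_or_lt with rfl | hfar
  · have cmp_succ := cmp (i + 1) (by omega) hjm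
    rw [swapAt_apply_left, swapAt_apply_right, swapAt_apply_of_ne x (k := i) (by omega) (by omega),
      swapAt_apply_left] at cmp_i
    rw [swapAt_apply_right, swapAt_apply_of_ne x (k := i + 1 + 1) (by omega) (by omega),
      swapAt_apply_left, swapAt_apply_right] at cmp_succ
    omega
  · rw [swapAt_apply_left, swapAt_apply_right, swapAt_apply_of_ne x (k := i) (by omega) (by omega),
      swapAt_apply_of_ne x (k := i + 1) (by omega) (by omega)] at cmp_i
    omega

theorem stmt6_general (m i j : ℕ) (x : ℕ → ℤ) (hx : Set.InjOn x (Set.Icc 1 m))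
    (hi1 : 1 ≤ i) (him : i + 1 ≤ m) (hj1 : 1 ≤ j) (hjm : j + 1 ≤ m)
    (hij : i ≠ j) :
    ctreeOf m (swapAt x i) ≠ ctreeOf m (swapAt x j) := by
  rcases hij.lt_or_gt with h | h
  · exact ctreeOf_swapAt_ne_of_lt hx hi1 h hjm
  · exact (ctreeOf_swapAt_ne_of_lt hx hj1 h him).symm

theorem stmt6 (m i j : ℕ) (x : ℕ → ℤ) (hx : Set.InjOn x (Set.Icc 1 m))
    (hi1 : 1 ≤ i) (him : i + 1 ≤ m) (hj1 : 1 ≤ j) (hjm : j + 1 ≤ m)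
    (hij : i ≠ j) (hxi : x i ≠ x (i + 1)) (hxj : x j ≠ x (j + 1)) :
    ctreeOf m (swapAt x i) ≠ ctreeOf m (swapAt x j) :=
  stmt6_general m i j x hx hi1 him hj1 hjm hij
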